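/- arXiv:1304.4642 — 3 statements merged into one kernel-verified Lean document; each statement's English description precedes it below -/
import Mathlib

section
/- If f : (ZMod 2)^n → ZMod 2 is bent, then n is even. -/
/-! The normalized transform is the integer Walsh sum `∑ₓ (-1)^(w·x + f x)` divided by `2^n`, so
bentness at `w = 0` makes the square of an integer equal to `2^n`; comparing `2`-adic valuations
gives that `n` is even. -/

noncomputable def signF (n : ℕ) (f : (Fin n → ZMod 2) → ZMod 2) : (Fin n → ZMod 2) → ℝ :=
  fun x => (-1 : ℝ) ^ (f x).val / Real.sqrt (2 ^ n)

noncomputable def fourierT (n : ℕ) (F : (Fin n → ZMod 2) → ℝ) : (Fin n → ZMod 2) → ℝ :=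
  fun w => (Real.sqrt (2 ^ n))⁻¹ * ∑ x : Fin n → ZMod 2, (-1 : ℝ) ^ (∑ i, (w i).val * (x i).val) * F x

theorem Int.even_of_sq_eq_prime_pow {p n : ℕ} (hp : p.Prime) {m : ℤ} (h : m ^ 2 = (p : ℤ) ^ n) :
    Even n := by
  have hnat : m.natAbs ^ 2 = p ^ n := by
    simpa [Int.natAbs_pow] using congrArg Int.natAbs h
  refine ⟨m.natAbs.factorization p, ?_⟩
  have := congrArg (·.factorization p) hnat
  simp only [Nat.factorization_pow, hp.factorization_pow, Finsupp.smul_apply, smul_eq_mul,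
    Finsupp.single_eq_same] at this
  omega

theorem Real.sq_eq_of_abs_div_eq_inv_sqrt {a N : ℝ} (hN : 0 < N) (h : |a / N| = (√N)⁻¹) :
    a ^ 2 = N := by
  calc a ^ 2 = |a / N| ^ 2 * N ^ 2 := by rw [sq_abs, div_pow, div_mul_cancel₀ _ (by positivity)]
    _ = N := by rw [h, inv_pow, Real.sq_sqrt hN.le]; field_simp

def walshSum {n : ℕ} (f : (Fin n → ZMod 2) → ZMod 2) (w : Fin n → ZMod 2) : ℤ :=
  ∑ x, (-1) ^ (∑ i, (w i).val * (x i).val + (f x).val)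

theorem fourierT_signF (n : ℕ) (f : (Fin n → ZMod 2) → ZMod 2) (w : Fin n → ZMod 2) :
    fourierT n (signF n f) w = walshSum f w / 2 ^ n := by
  have h2n : (0 : ℝ) ≤ 2 ^ n := by positivity
  simp only [fourierT, signF, walshSum, mul_div_assoc', ← pow_add, Int.cast_sum, Int.cast_pow,
    Int.cast_neg, Int.cast_one, ← Finset.sum_div]
  rw [inv_mul_eq_div, div_div, Real.mul_self_sqrt h2n]

theorem bent_implies_even_general (n : ℕ) (f : (Fin n → ZMod 2) → ZMod 2)
    (hbent : ∀ w, |fourierT n (signF n f) w| = (Real.sqrt (2 ^ n))⁻¹) :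
    Even n := by
  have hsq : (walshSum f 0 : ℝ) ^ 2 = 2 ^ n :=
    Real.sq_eq_of_abs_div_eq_inv_sqrt (by positivity) (fourierT_signF n f 0 ▸ hbent 0)
  exact Int.even_of_sq_eq_prime_pow Nat.prime_two (by exact_mod_cast hsq)

theorem bent_implies_even (n : ℕ) (hn : 1 ≤ n) (f : (Fin n → ZMod 2) → ZMod 2)
    (hbent : ∀ w, |fourierT n (signF n f) w| = (Real.sqrt (2 ^ n))⁻¹) :
    Even n :=
  bent_implies_even_general n f hbent
end

section
/- Given k ≥ 2 distinct Boolean strings of length N, there exists a subset S of indices of size at most k − 1 such that the restrictions of the strings to S are pairwise distinct. -/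
/-!
Restricting the strings to a set `S` of coordinates splits them into classes of strings that
agree on `S`. While two distinct strings agree on `S`, adding a coordinate where they differ
splits their class, so each new coordinate adds at least one class. Starting from `S = ∅` with
one class and never exceeding `k` classes, at most `k - 1` coordinates are added before all
strings are separated.
-/

open Finset

namespace Finset

variable {α β : Type*} [DecidableEq β] {T : Finset (α → β)}

theorem card_image_restrict_lt_of_subset {S S' : Finset α} (hSS' : S ⊆ S') {f g : α → β}
    (hf : f ∈ T) (hg : g ∈ T) (hfg : S.restrict f = S.restrict g)
    (hne : S'.restrict f ≠ S'.restrict g) :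
    #(T.image S.restrict) < #(T.image S'.restrict) := by
  have hfactor :
      T.image S.restrict = (T.image S'.restrict).image (restrict₂ (π := fun _ => β) hSS') := by
    rw [image_image, restrict₂_comp_restrict]
  have hnotInj :
      ¬ Set.InjOn (restrict₂ (π := fun _ => β) hSS') (T.image S'.restrict : Set (S' → β)) :=
    fun hinj => hne (hinj (mem_image_of_mem _ hf) (mem_image_of_mem _ hg) hfg)
  rw [hfactor]
  exact lt_of_le_of_ne card_image_le (mt card_image_iff.mp hnotInj)

theorem exists_injOn_restrict_of_card_add_one_le [DecidableEq α] (S : Finset α)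
    (hS : #S + 1 ≤ #(T.image S.restrict)) :
    ∃ S' : Finset α,
      #S' + 1 ≤ #(T.image S'.restrict) ∧ Set.InjOn S'.restrict (T : Set (α → β)) := by
  by_cases hinj : Set.InjOn S.restrict (T : Set (α → β))
  · exact ⟨S, hS, hinj⟩
  obtain ⟨f, hf, g, hg, hfg, hne⟩ :
      ∃ f ∈ T, ∃ g ∈ T, S.restrict f = S.restrict g ∧ f ≠ g := by
    simpa [Set.InjOn] using hinj
  obtain ⟨a, ha⟩ := Function.ne_iff.mp hne
  have haS : a ∉ S := fun haS => ha (congrFun hfg ⟨a, haS⟩)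
  have hlt : #(T.image S.restrict) < #(T.image (insert a S).restrict) :=
    card_image_restrict_lt_of_subset (subset_insert a S) hf hg hfg
      fun h => ha (congrFun h ⟨a, mem_insert_self a S⟩)
  have hle : #(T.image (insert a S).restrict) ≤ #T := card_image_le
  exact exists_injOn_restrict_of_card_add_one_le (insert a S)
    (by rw [card_insert_of_notMem haS]; omega)
termination_by #T - #(T.image S.restrict)

theorem exists_card_le_injOn_restrict [DecidableEq α] (T : Finset (α → β)) :
    ∃ S : Finset α, #S ≤ #T - 1 ∧ Set.InjOn S.restrict (T : Set (α → β)) := by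
  obtain rfl | hT := T.eq_empty_or_nonempty
  · exact ⟨∅, by simp, by simp⟩
  obtain ⟨S, hcard, hinj⟩ :=
    exists_injOn_restrict_of_card_add_one_le ∅ (by rw [card_empty]; exact (hT.image _).card_pos)
  have hle : #(T.image S.restrict) ≤ #T := card_image_le
  exact ⟨S, by omega, hinj⟩

end Finset

theorem distinguishing_subset_general (N k : ℕ) (y : Fin k → Fin N → Bool)
    (hy : Function.Injective y) :
    ∃ S : Finset (Fin N), S.card ≤ k - 1 ∧
      ∀ i j : Fin k, i ≠ j → ∃ a ∈ S, y i a ≠ y j a := by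
  obtain ⟨S, hcard, hinj⟩ := exists_card_le_injOn_restrict (univ.image y)
  rw [card_image_of_injective _ hy, card_univ, Fintype.card_fin] at hcard
  refine ⟨S, hcard, fun i j hij => ?_⟩
  have hrestrict : S.restrict (y i) ≠ S.restrict (y j) :=
    fun h => hij (hy (hinj (by simp) (by simp) h))
  obtain ⟨⟨a, haS⟩, ha⟩ := Function.ne_iff.mp hrestrict
  exact ⟨a, haS, ha⟩

theorem distinguishing_subset (N k : ℕ) (hk : 2 ≤ k) (y : Fin k → Fin N → Bool)
    (hy : Function.Injective y) :
    ∃ S : Finset (Fin N), S.card ≤ k - 1 ∧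
      ∀ i j : Fin k, i ≠ j → ∃ a ∈ S, y i a ≠ y j a :=
  distinguishing_subset_general N k y hy
end

section
/- The string s is a b-shift of f (meaning f(x + s) = f(x) + b for all x) if and only if the autocorrelation satisfies (F*F)(s) = (-1)^b, where F(x) = (-1)^{f(x)}/√(2^n). -/
/-!
Since `signF n f x * signF n f (x + s) = (-1) ^ (f (x + s) - f x) / 2 ^ n`, the autocorrelation
at `s` is the average of the signs `(-1) ^ (f (x + s) - f x)` over the `2 ^ n` points `x`. An
average of numbers `±1` equals `±1` exactly when all of them do.
-/

section NegOnePowVal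

variable {R : Type*} [Ring R]

theorem neg_one_pow_zmod_two_val_add (a c : ZMod 2) :
    (-1 : R) ^ (a + c).val = (-1) ^ a.val * (-1) ^ c.val := by
  rw [ZMod.val_add, ← neg_one_pow_eq_pow_mod_two, pow_add]

theorem neg_one_pow_zmod_two_val_mul_self (a : ZMod 2) :
    (-1 : R) ^ a.val * (-1) ^ a.val = 1 := by
  rw [← neg_one_pow_zmod_two_val_add, CharTwo.add_self_eq_zero, ZMod.val_zero, pow_zero]

theorem neg_one_pow_zmod_two_val_eq_one_iff (h : (-1 : R) ≠ 1) (a : ZMod 2) :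
    (-1 : R) ^ a.val = 1 ↔ a = 0 := by
  rw [neg_one_pow_eq_one_iff_even h, ← ZMod.natCast_eq_zero_iff_even, ZMod.natCast_zmod_val]

variable [LinearOrder R] [IsStrictOrderedRing R]

theorem neg_one_pow_zmod_two_val_le_one (a : ZMod 2) : (-1 : R) ^ a.val ≤ 1 := by
  rcases neg_one_pow_eq_or R a.val with h | h <;> rw [h]
  exact neg_one_lt_zero.le.trans zero_le_one

theorem sum_neg_one_pow_zmod_two_val_eq_iff {α : Type*} [Fintype α] (g : α → ZMod 2)
    (b : ZMod 2) :
    ∑ x, (-1 : R) ^ (g x).val = Fintype.card α * (-1) ^ b.val ↔ ∀ x, g x = b := by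
  have hne : (-1 : R) ≠ 1 := (neg_one_lt_zero.trans zero_lt_one).ne
  calc ∑ x, (-1 : R) ^ (g x).val = Fintype.card α * (-1) ^ b.val
      ↔ ∑ x, (-1 : R) ^ (g x + b).val = ∑ _x : α, 1 := by
        simp only [neg_one_pow_zmod_two_val_add, ← Finset.sum_mul, Finset.sum_const,
          Finset.card_univ, nsmul_eq_mul, mul_one]
        constructor <;> intro h
        · rw [h, mul_assoc, neg_one_pow_zmod_two_val_mul_self, mul_one]
        · rw [← h, mul_assoc, neg_one_pow_zmod_two_val_mul_self, mul_one]
    _ ↔ ∀ x, (-1 : R) ^ (g x + b).val = 1 := by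
        simpa using Finset.sum_eq_sum_iff_of_le (s := Finset.univ) fun x _ =>
          neg_one_pow_zmod_two_val_le_one (R := R) (g x + b)
    _ ↔ ∀ x, g x = b := by
        simp only [neg_one_pow_zmod_two_val_eq_one_iff hne, CharTwo.add_eq_zero]

end NegOnePowVal

theorem signF_mul_signF (n : ℕ) (f : (Fin n → ZMod 2) → ZMod 2) (x y : Fin n → ZMod 2) :
    signF n f x * signF n f y = (-1 : ℝ) ^ (f y - f x).val / 2 ^ n := by
  rw [signF, signF, div_mul_div_comm, Real.mul_self_sqrt (by positivity), CharTwo.sub_eq_add,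
    add_comm, neg_one_pow_zmod_two_val_add]

theorem bshift_iff_autocorrelation (n : ℕ) (f : (Fin n → ZMod 2) → ZMod 2)
    (s : Fin n → ZMod 2) (b : ZMod 2) :
    (∀ x, f (x + s) = f x + b) ↔
      (∑ x : Fin n → ZMod 2, signF n f x * signF n f (x + s)) = (-1 : ℝ) ^ b.val := by
  have hcard : (Fintype.card (Fin n → ZMod 2) : ℝ) = 2 ^ n := by simp
  simp only [signF_mul_signF, ← Finset.sum_div]
  rw [div_eq_iff (by positivity), mul_comm, ← hcard, sum_neg_one_pow_zmod_two_val_eq_iff (R := ℝ)]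
  simp only [sub_eq_iff_eq_add']
end
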